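/- Let X be a nonempty set, and let T > 0, κ > 0, D > 0. For each t ∈ (0, T] let d_t be a metric on X with d_t(x,y) ≤ D for all x, y ∈ X, and assume that for all 0 < s < t ≤ T and all x, y ∈ X one has d_s(x,y) − κ(√t − √s) ≤ d_t(x,y) ≤ e^{κ(t−s)} d_s(x,y). Then there exists a function d₀ : X × X → ℝ such that d_t converges to d₀ uniformly on X × X as t → 0⁺; moreover d₀ is a pseudometric (nonnegative, symmetric, vanishing on the diagonal, and satisfying the triangle inequality), and for every t ∈ (0, T] and all x, y ∈ X one has e^{−κt} d_t(x,y) ≤ d₀(x,y) ≤ d_t(x,y) + κ√t. -/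
import Mathlib


open Filter Topology

/-- Let `X` be a nonempty set and `T, κ, D > 0`. Suppose that for each `t ∈ (0, T]`,
`d t` is a metric on `X` bounded by `D`, and for `0 < s < t ≤ T`,
`d s x y − κ(√t − √s) ≤ d t x y ≤ e^{κ(t−s)} d s x y`. Then the distances `d t` converge
uniformly on `X × X` as `t → 0⁺` to a pseudometric `d₀`, which moreover satisfies
`e^{−κt} d t x y ≤ d₀ x y ≤ d t x y + κ √t` for all `t ∈ (0, T]`. -/
theorem stmt_1 {X : Type*} [Nonempty X] (T κ D : ℝ) (hT : 0 < T) (hκ : 0 < κ) (hD : 0 < D)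
    (d : ℝ → X → X → ℝ)
    (h_nonneg : ∀ t ∈ Set.Ioc (0 : ℝ) T, ∀ x y, 0 ≤ d t x y)
    (h_symm : ∀ t ∈ Set.Ioc (0 : ℝ) T, ∀ x y, d t x y = d t y x)
    (h_triangle : ∀ t ∈ Set.Ioc (0 : ℝ) T, ∀ x y z, d t x z ≤ d t x y + d t y z)
    (h_eq_iff : ∀ t ∈ Set.Ioc (0 : ℝ) T, ∀ x y, (d t x y = 0 ↔ x = y))
    (h_bdd : ∀ t ∈ Set.Ioc (0 : ℝ) T, ∀ x y, d t x y ≤ D)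
    (h_est : ∀ s t : ℝ, 0 < s → s < t → t ≤ T → ∀ x y,
      d s x y - κ * (Real.sqrt t - Real.sqrt s) ≤ d t x y ∧
      d t x y ≤ Real.exp (κ * (t - s)) * d s x y) :
    ∃ d₀ : X → X → ℝ,
      TendstoUniformly (fun t (p : X × X) => d t p.1 p.2) (fun p => d₀ p.1 p.2)
        (𝓝[>] (0 : ℝ)) ∧
      (∀ x y, 0 ≤ d₀ x y) ∧
      (∀ x y, d₀ x y = d₀ y x) ∧
      (∀ x, d₀ x x = 0) ∧
      (∀ x y z, d₀ x z ≤ d₀ x y + d₀ y z) ∧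
      (∀ t ∈ Set.Ioc (0 : ℝ) T, ∀ x y,
        Real.exp (-(κ * t)) * d t x y ≤ d₀ x y ∧ d₀ x y ≤ d t x y + κ * Real.sqrt t) := by
  set d₀ : X → X → ℝ :=
    fun x y => sInf ((fun t => d t x y + κ * Real.sqrt t) '' Set.Ioc 0 T) with hd₀def
  have hbdd : ∀ x y, BddBelow ((fun t => d t x y + κ * Real.sqrt t) '' Set.Ioc 0 T) := by
    intro x y
    refine ⟨0, ?_⟩
    rintro r ⟨t, ht, rfl⟩
    exact add_nonneg (h_nonneg t ht x y) (mul_nonneg hκ.le (Real.sqrt_nonneg _))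
  have hne : ∀ x y : X, ((fun t => d t x y + κ * Real.sqrt t) '' Set.Ioc 0 T).Nonempty :=
    fun x y => ⟨_, ⟨T, ⟨hT, le_refl T⟩, rfl⟩⟩
  have hub : ∀ t ∈ Set.Ioc (0 : ℝ) T, ∀ x y, d₀ x y ≤ d t x y + κ * Real.sqrt t :=
    fun t ht x y => csInf_le (hbdd x y) ⟨t, ht, rfl⟩
  have hlb : ∀ t ∈ Set.Ioc (0 : ℝ) T, ∀ x y, Real.exp (-(κ * t)) * d t x y ≤ d₀ x y := by
    intro t ht x y
    apply le_csInf (hne x y)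
    rintro r ⟨s, hs, rfl⟩
    show Real.exp (-(κ * t)) * d t x y ≤ d s x y + κ * Real.sqrt s
    have hsq : 0 ≤ κ * Real.sqrt s := mul_nonneg hκ.le (Real.sqrt_nonneg _)
    have hnns := h_nonneg s hs x y
    rcases lt_trichotomy s t with h | h | h
    · have h2 := (h_est s t hs.1 h ht.2 x y).2
      have step1 : Real.exp (-(κ * t)) * d t x y ≤
          Real.exp (-(κ * t)) * (Real.exp (κ * (t - s)) * d s x y) :=
        mul_le_mul_of_nonneg_left h2 (Real.exp_pos _).le
      have step2 : Real.exp (-(κ * t)) * (Real.exp (κ * (t - s)) * d s x y)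
          = Real.exp (-(κ * s)) * d s x y := by
        rw [← mul_assoc, ← Real.exp_add]; ring_nf
      have hexp : Real.exp (-(κ * s)) ≤ 1 :=
        Real.exp_le_one_iff.mpr (by nlinarith [hs.1])
      have step3 : Real.exp (-(κ * s)) * d s x y ≤ 1 * d s x y :=
        mul_le_mul_of_nonneg_right hexp hnns
      rw [step2] at step1
      linarith
    · subst h
      have hexp : Real.exp (-(κ * s)) ≤ 1 :=
        Real.exp_le_one_iff.mpr (by nlinarith [hs.1])
      have step3 : Real.exp (-(κ * s)) * d s x y ≤ 1 * d s x y :=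
        mul_le_mul_of_nonneg_right hexp hnns
      linarith
    · have h1 := (h_est t s ht.1 h hs.2 x y).1
      have hdt : d t x y ≤ d s x y + κ * Real.sqrt s := by
        nlinarith [Real.sqrt_nonneg t, Real.sqrt_nonneg s]
      have hexp : Real.exp (-(κ * t)) ≤ 1 :=
        Real.exp_le_one_iff.mpr (by nlinarith [ht.1])
      have step3 : Real.exp (-(κ * t)) * d t x y ≤ 1 * d t x y :=
        mul_le_mul_of_nonneg_right hexp (h_nonneg t ht x y)
      linarith
  have h0le : ∀ x y, 0 ≤ d₀ x y := by
    intro x y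
    apply le_csInf (hne x y)
    rintro r ⟨t, ht, rfl⟩
    exact add_nonneg (h_nonneg t ht x y) (mul_nonneg hκ.le (Real.sqrt_nonneg _))
  -- uniform convergence
  have hIoo : Set.Ioo (0 : ℝ) T ∈ 𝓝[>] (0 : ℝ) :=
    Ioo_mem_nhdsGT_of_mem ⟨le_refl 0, hT⟩
  have hconv : TendstoUniformly (fun t (p : X × X) => d t p.1 p.2) (fun p => d₀ p.1 p.2)
      (𝓝[>] (0 : ℝ)) := by
    rw [Metric.tendstoUniformly_iff]
    intro ε hε
    have hg : Tendsto (fun t : ℝ => κ * Real.sqrt t + (1 - Real.exp (-(κ * t))) * D)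
        (𝓝[>] (0 : ℝ)) (𝓝 0) := by
      have hc : Continuous (fun t : ℝ => κ * Real.sqrt t + (1 - Real.exp (-(κ * t))) * D) :=
        ((continuous_const.mul Real.continuous_sqrt).add
          ((continuous_const.sub (Real.continuous_exp.comp
            (continuous_const.mul continuous_id).neg)).mul continuous_const))
      have := (hc.tendsto 0).mono_left (nhdsWithin_le_nhds (s := Set.Ioi (0:ℝ)))
      simpa using this
    filter_upwards [hIoo, hg.eventually (gt_mem_nhds hε)] with t ht hgt
    intro p
    have ht' : t ∈ Set.Ioc (0 : ℝ) T := ⟨ht.1, ht.2.le⟩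
    have h1 := hub t ht' p.1 p.2
    have h2 := hlb t ht' p.1 p.2
    have hexp1 : Real.exp (-(κ * t)) ≤ 1 :=
      Real.exp_le_one_iff.mpr (by nlinarith [ht.1])
    have hexp0 : 0 ≤ Real.exp (-(κ * t)) := (Real.exp_pos _).le
    have hbd := h_bdd t ht' p.1 p.2
    have hnn := h_nonneg t ht' p.1 p.2
    rw [Real.dist_eq, abs_sub_lt_iff]
    constructor
    · -- d₀ - d t < ε
      have : d₀ p.1 p.2 - d t p.1 p.2 ≤ κ * Real.sqrt t := by linarith
      nlinarith [mul_nonneg (by linarith : (0:ℝ) ≤ 1 - Real.exp (-(κ * t))) hD.le]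
    · -- d t - d₀ ≤ (1 - exp(-κt)) * d t ≤ (1 - exp) * D
      have : d t p.1 p.2 - d₀ p.1 p.2 ≤ (1 - Real.exp (-(κ * t))) * d t p.1 p.2 := by
        nlinarith
      have h3 : (1 - Real.exp (-(κ * t))) * d t p.1 p.2 ≤ (1 - Real.exp (-(κ * t))) * D :=
        mul_le_mul_of_nonneg_left hbd (by linarith)
      nlinarith [mul_nonneg hκ.le (Real.sqrt_nonneg t)]
  have hNeBot : (𝓝[>] (0 : ℝ)).NeBot := nhdsGT_neBot 0
  have hpt : ∀ x y : X, Tendsto (fun t => d t x y) (𝓝[>] (0 : ℝ)) (𝓝 (d₀ x y)) :=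
    fun x y => hconv.tendsto_at (x, y)
  have hIoc : ∀ᶠ t in 𝓝[>] (0:ℝ), t ∈ Set.Ioc (0:ℝ) T := by
    filter_upwards [hIoo] with t ht; exact ⟨ht.1, ht.2.le⟩
  refine ⟨d₀, hconv, h0le, ?_, ?_, ?_, fun t ht x y => ⟨hlb t ht x y, hub t ht x y⟩⟩
  · intro x y
    refine tendsto_nhds_unique ((hpt x y).congr' ?_) (hpt y x)
    filter_upwards [hIoc] with t ht using h_symm t ht x y
  · intro x
    refine tendsto_nhds_unique ((hpt x x).congr' ?_) (tendsto_const_nhds (x := (0:ℝ)))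
    filter_upwards [hIoc] with t ht using (h_eq_iff t ht x x).mpr rfl
  · intro x y z
    refine le_of_tendsto_of_tendsto (hpt x z) ((hpt x y).add (hpt y z)) ?_
    filter_upwards [hIoc] with t ht using h_triangle t ht x y z
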